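/- arXiv:1310.0472 — 2 statements merged into one kernel-verified Lean document; each statement's English description precedes it below -/
import Mathlib

section
/- For α ∈ (0,2), the mean square displacement ⟨ΔX²_n⟩ = Σ_{j=−n}^n A_j j² of the slicer map S_α with uniform initial distribution on cell 0 satisfies: lim_{n→∞} ⟨ΔX²_n⟩/n^γ = +∞ for 0 ≤ γ < 2−α, = 4/(2−α) for γ = 2−α, and = 0 for 2−α < γ ≤ 2. In particular the transport exponent is γ^t = 2−α. -/
/-!
Passing from time `n` to `n + 2` only moves the mass `ℓ_{n+1}` from the cells `±n` to the cells
`±(n + 2)`, so `⟨ΔX²_{n+2}⟩ - ⟨ΔX²_n⟩ = 8 (n + 1) ℓ_{n+1} ~ 8 n^{1-α}`. Since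
`(n + 2)^{2-α} - n^{2-α} ~ 2 (2 - α) n^{1-α}`, the Stolz–Cesàro theorem, applied separately along
even and odd times, gives `⟨ΔX²_n⟩ ~ 4 n^{2-α} / (2 - α)`; the other two regimes follow on
multiplying by `n^{2-α-γ}`.
-/

open Filter

noncomputable def ella (α : ℝ) (m : ℤ) : ℝ :=
  (((|m| : ℤ) : ℝ) + (2:ℝ) ^ (1/α)) ^ (-α)

/-- The coarse-grained distribution of the slicer map `S_α` at time `n`:
`A_{±n} = ℓ_{n-1}`, `A_j = ℓ_{|j|-1} - ℓ_{|j|+1}` for `0 < |j| < n` with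
`j ≡ n (mod 2)`, `A_0 = 2(ℓ_0 - ℓ_1)` for even `n`, and `A_j = 0` otherwise. -/
noncomputable def Acg (α : ℝ) (n : ℕ) (j : ℤ) : ℝ :=
  if |j| = (n:ℤ) then ella α ((n:ℤ) - 1)
  else if j = 0 ∧ Even n then 2 * (ella α 0 - ella α 1)
  else if 0 < |j| ∧ |j| < (n:ℤ) ∧ j % 2 = (n:ℤ) % 2 then
    ella α (|j| - 1) - ella α (|j| + 1)
  else 0

/-- The mean square displacement (`p = 2`) and more generally the `p`-th moment of
the coarse-grained distribution. -/
noncomputable def momentCG (α : ℝ) (p : ℕ) (n : ℕ) : ℝ :=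
  ∑ j ∈ Finset.Icc (-(n:ℤ)) (n:ℤ), Acg α n j * (j:ℝ) ^ p

open Topology Asymptotics Finset

theorem tendsto_of_tendsto_two_mul_add {β : Type*} {f : ℕ → β} {l : Filter β}
    (h : ∀ r, Tendsto (fun k => f (2 * k + r)) atTop l) : Tendsto f atTop l := by
  intro s hs
  obtain ⟨N₀, hN₀⟩ := eventually_atTop.1 (h 0 hs)
  obtain ⟨N₁, hN₁⟩ := eventually_atTop.1 (h 1 hs)
  refine eventually_atTop.2 ⟨2 * (N₀ + N₁), fun n hn => ?_⟩
  obtain ⟨k, rfl | rfl⟩ := Nat.even_or_odd' n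
  · exact hN₀ k (by omega)
  · exact hN₁ k (by omega)

theorem tendsto_div_of_tendsto_sub_div_sub {a b : ℕ → ℝ} {L : ℝ} (hb : StrictMono b)
    (hb_top : Tendsto b atTop atTop)
    (h : Tendsto (fun n => (a (n + 1) - a n) / (b (n + 1) - b n)) atTop (𝓝 L)) :
    Tendsto (fun n => a n / b n) atTop (𝓝 L) := by
  have hΔb : ∀ n, 0 < b (n + 1) - b n := fun n => sub_pos.2 (hb n.lt_succ_self)
  have hΔ : (fun n => (a (n + 1) - a n) - L * (b (n + 1) - b n)) =o[atTop]
      fun n => b (n + 1) - b n := by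
    refine (isLittleO_iff_tendsto' (.of_forall fun n h => absurd h (hΔb n).ne')).2 ?_
    refine (tendsto_sub_nhds_zero_iff.2 h).congr fun n => ?_
    field_simp [(hΔb n).ne']
  have htel : ∀ n, ∑ i ∈ range n, ((a (i + 1) - a i) - L * (b (i + 1) - b i)) =
      (a n - a 0) - L * (b n - b 0) := fun n => by
    rw [sum_sub_distrib, ← mul_sum, sum_range_sub, sum_range_sub]
  have hsum := hΔ.sum_range (fun n => (hΔb n).le) <| by
    simpa only [sum_range_sub, ← sub_eq_add_neg] using
      tendsto_atTop_add_const_right _ (-b 0) hb_top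
  simp only [htel, sum_range_sub] at hsum
  have hb_norm : Tendsto (norm ∘ b) atTop atTop := tendsto_norm_atTop_atTop.comp hb_top
  have hmain : (fun n => a n - L * b n) =o[atTop] b := by
    have h1 := hsum.trans_isBigO ((isBigO_refl b atTop).sub
      (isLittleO_const_left.2 (Or.inr hb_norm)).isBigO)
    have h2 : (fun _ => a 0 - L * b 0) =o[atTop] b := isLittleO_const_left.2 (Or.inr hb_norm)
    exact (h1.add h2).congr_left fun n => by ring
  refine tendsto_sub_nhds_zero_iff.1 (hmain.tendsto_div_nhds_zero.congr' ?_)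
  filter_upwards [hb_top.eventually_gt_atTop 0] with n hn
  field_simp

theorem tendsto_div_of_tendsto_sub_two_div_sub {a b : ℕ → ℝ} {L : ℝ} (hb : StrictMono b)
    (hb_top : Tendsto b atTop atTop)
    (h : Tendsto (fun n => (a (n + 2) - a n) / (b (n + 2) - b n)) atTop (𝓝 L)) :
    Tendsto (fun n => a n / b n) atTop (𝓝 L) := by
  refine tendsto_of_tendsto_two_mul_add fun r => ?_
  have hr : StrictMono fun k => 2 * k + r := fun i j hij => by dsimp only; omega
  refine tendsto_div_of_tendsto_sub_div_sub (a := fun k => a (2 * k + r)) (hb.comp hr)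
    (hb_top.comp hr.tendsto_atTop) ?_
  refine (h.comp hr.tendsto_atTop).congr fun k => ?_
  simp only [Function.comp, show 2 * (k + 1) + r = 2 * k + r + 2 by ring]

theorem tendsto_one_add_div_rpow (b p : ℝ) :
    Tendsto (fun x : ℝ => (1 + b / x) ^ p) atTop (𝓝 1) := by
  have h : Tendsto (fun x : ℝ => 1 + b / x) atTop (𝓝 1) := by
    simpa using (tendsto_const_nhds (x := (1 : ℝ))).add
      (tendsto_const_nhds.div_atTop tendsto_id)
  simpa [Function.comp_def] using
    (Real.continuousAt_rpow_const 1 p (Or.inl one_ne_zero)).tendsto.comp h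

theorem tendsto_add_rpow_div_rpow (b p : ℝ) :
    Tendsto (fun x : ℝ => (x + b) ^ p / x ^ p) atTop (𝓝 1) := by
  refine (tendsto_one_add_div_rpow b p).congr' ?_
  filter_upwards [eventually_gt_atTop 0, eventually_ge_atTop (-b)] with x hx hxb
  rw [← Real.div_rpow (by linarith) hx.le, add_div, div_self hx.ne']

theorem tendsto_add_rpow_sub_rpow_div_rpow (h s : ℝ) :
    Tendsto (fun x : ℝ => ((x + h) ^ s - x ^ s) / x ^ (s - 1)) atTop (𝓝 (h * s)) := by
  rcases eq_or_ne h 0 with rfl | hh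
  · simp
  have hslope : Tendsto (fun t : ℝ => t⁻¹ * ((1 + t) ^ s - 1)) (𝓝[≠] 0) (𝓝 s) := by
    simpa using (Real.hasDerivAt_rpow_const (p := s) (Or.inl one_ne_zero)).tendsto_slope_zero
  have hdiv : Tendsto (fun x : ℝ => h / x) atTop (𝓝[≠] 0) :=
    tendsto_nhdsWithin_of_tendsto_nhds_of_eventually_within _
      (tendsto_const_nhds.div_atTop tendsto_id)
      (by filter_upwards [eventually_gt_atTop 0] with x hx; exact div_ne_zero hh hx.ne')
  refine ((hslope.comp hdiv).const_mul h).congr' ?_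
  filter_upwards [eventually_gt_atTop 0, eventually_ge_atTop (-h)] with x hx hxh
  have hsplit : (x + h) ^ s = x ^ s * (1 + h / x) ^ s := by
    have h1 : 0 ≤ 1 + h / x := by rw [one_add_div hx.ne']; exact div_nonneg (by linarith) hx.le
    rw [← Real.mul_rpow hx.le h1, mul_one_add, mul_div_cancel₀ _ hx.ne']
  have hxs : x ^ s = x ^ (s - 1) * x := by
    rw [← Real.rpow_add_one hx.ne', sub_add_cancel]
  have : x ^ (s - 1) ≠ 0 := (Real.rpow_pos_of_pos hx _).ne'
  simp only [Function.comp, hsplit, hxs]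
  field_simp

theorem tendsto_mul_rpow_div_rpow_sub_rpow {α : ℝ} (hα : α < 2) (c : ℝ) :
    Tendsto (fun x : ℝ => 8 * (x + 1) * (x + 1 + c) ^ (-α) / ((x + 2) ^ (2 - α) - x ^ (2 - α)))
      atTop (𝓝 (4 / (2 - α))) := by
  have hnum : Tendsto (fun x : ℝ => 8 * (x + 1) * (x + 1 + c) ^ (-α) / x ^ (2 - α - 1)) atTop
      (𝓝 (8 * 1 * 1)) := by
    refine ((tendsto_add_rpow_div_rpow 1 1).const_mul 8 |>.mul
      (tendsto_add_rpow_div_rpow (1 + c) (-α))).congr' ?_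
    filter_upwards [eventually_gt_atTop 0] with x hx
    rw [show 2 - α - 1 = 1 + -α by ring, Real.rpow_add hx]
    simp only [Real.rpow_one, add_assoc]
    field_simp
  have hden := tendsto_add_rpow_sub_rpow_div_rpow 2 (2 - α)
  have hlim : 8 * 1 * 1 / (2 * (2 - α)) = 4 / (2 - α) := by
    field_simp [(sub_pos.2 hα).ne']; ring
  refine hlim ▸ (hnum.div hden (mul_ne_zero two_ne_zero (sub_pos.2 hα).ne')).congr' ?_
  filter_upwards [eventually_gt_atTop 0] with x hx
  have : x ^ (2 - α - 1) ≠ 0 := (Real.rpow_pos_of_pos hx _).ne'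
  simp only [Pi.div_apply]
  field_simp

theorem tendsto_div_rpow_atTop_of_lt {f : ℕ → ℝ} {s L γ : ℝ}
    (hf : Tendsto (fun n : ℕ => f n / (n : ℝ) ^ s) atTop (𝓝 L)) (hL : 0 < L) (hγ : γ < s) :
    Tendsto (fun n : ℕ => f n / (n : ℝ) ^ γ) atTop atTop := by
  refine (hf.pos_mul_atTop hL ((tendsto_rpow_atTop (sub_pos.2 hγ)).comp
    tendsto_natCast_atTop_atTop)).congr' ?_
  filter_upwards [eventually_gt_atTop 0] with n hn
  have hn' : (0 : ℝ) < n := Nat.cast_pos.2 hn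
  simp only [Function.comp, Real.rpow_sub hn']
  field_simp

theorem tendsto_div_rpow_zero_of_lt {f : ℕ → ℝ} {s L γ : ℝ}
    (hf : Tendsto (fun n : ℕ => f n / (n : ℝ) ^ s) atTop (𝓝 L)) (hγ : s < γ) :
    Tendsto (fun n : ℕ => f n / (n : ℝ) ^ γ) atTop (𝓝 0) := by
  have hpow : Tendsto (fun n : ℕ => (n : ℝ) ^ (-(γ - s))) atTop (𝓝 0) :=
    (tendsto_rpow_neg_atTop (sub_pos.2 hγ)).comp tendsto_natCast_atTop_atTop
  refine (mul_zero L ▸ hf.mul hpow).congr' ?_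
  filter_upwards [eventually_gt_atTop 0] with n hn
  have hn' : (0 : ℝ) < n := Nat.cast_pos.2 hn
  rw [neg_sub, Real.rpow_sub hn']
  field_simp

theorem ella_of_nonneg (α : ℝ) {m : ℤ} (hm : 0 ≤ m) :
    ella α m = ((m : ℝ) + 2 ^ (1 / α)) ^ (-α) := by
  rw [ella, abs_of_nonneg hm]

theorem Acg_eq_zero_of_lt_abs (α : ℝ) {n : ℕ} {j : ℤ} (hj : (n : ℤ) < |j|) : Acg α n j = 0 := by
  unfold Acg
  rw [if_neg (by omega), if_neg (by rintro ⟨rfl, -⟩; simp at hj; omega), if_neg (by omega)]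

/-- Multiplying by `j ^ 2` discards the cell `j = 0`, where `Acg α 0 0 = ella α (-1)` breaks the
pattern. -/
theorem Acg_add_two_mul_sq (α : ℝ) (n : ℕ) (j : ℤ) :
    Acg α (n + 2) j * (j : ℝ) ^ 2 = Acg α n j * (j : ℝ) ^ 2 + ella α ((n : ℤ) + 1) *
      ((if |j| = (n : ℤ) + 2 then (j : ℝ) ^ 2 else 0) -
        (if |j| = (n : ℤ) then (j : ℝ) ^ 2 else 0)) := by
  rcases eq_or_ne j 0 with rfl | hj
  · simp
  unfold Acg
  push_cast
  have := abs_cases j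
  split_ifs <;> first | (exfalso; omega) | skip
  all_goals (try rw [‹|j| = (n : ℤ)›]); ring_nf

theorem sum_Icc_ite_abs_eq_sq {N k : ℤ} (hk : 0 ≤ k) (hkN : k ≤ N) :
    ∑ j ∈ Icc (-N) N, (if |j| = k then (j : ℝ) ^ 2 else 0) = 2 * (k : ℝ) ^ 2 := by
  have hsplit : ∀ j : ℤ, (if |j| = k then (j : ℝ) ^ 2 else 0) =
      (if k = j then (k : ℝ) ^ 2 else 0) + (if -k = j then (k : ℝ) ^ 2 else 0) := by
    intro j
    rcases eq_or_ne j 0 with rfl | hj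
    · split_ifs <;> simp_all
    have := abs_cases j
    split_ifs <;> first | (exfalso; omega) | (subst_vars; simp_all)
  simp only [hsplit, sum_add_distrib, sum_ite_eq, mem_Icc]
  rw [if_pos (by omega), if_pos (by omega)]
  ring

theorem momentCG_two_add_two (α : ℝ) (n : ℕ) :
    momentCG α 2 (n + 2) = momentCG α 2 n + 8 * ((n : ℝ) + 1) * ella α ((n : ℤ) + 1) := by
  have hsub : ∑ j ∈ Icc (-((n + 2 : ℕ) : ℤ)) ((n + 2 : ℕ) : ℤ), Acg α n j * (j : ℝ) ^ 2 =
      momentCG α 2 n := by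
    refine (sum_subset (fun j => by simp only [mem_Icc]; omega) fun j _ hj => ?_).symm
    rw [Acg_eq_zero_of_lt_abs α (by simp only [mem_Icc] at hj; rw [lt_abs]; omega), zero_mul]
  unfold momentCG
  rw [sum_congr rfl fun j _ => Acg_add_two_mul_sq α n j, sum_add_distrib, ← mul_sum,
    sum_sub_distrib, hsub]
  push_cast
  rw [sum_Icc_ite_abs_eq_sq (by omega) le_rfl, sum_Icc_ite_abs_eq_sq (by omega) (by omega)]
  unfold momentCG
  push_cast
  ring

/-- for `α ∈ (0,2)`, the mean square displacement
`⟨ΔX²_n⟩ = Σ_{j=-n}^n A_j j²` of the slicer map `S_α` satisfies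
`⟨ΔX²_n⟩/n^γ → ∞` for `0 ≤ γ < 2-α`, `→ 4/(2-α)` for `γ = 2-α`, and `→ 0` for
`2-α < γ ≤ 2`; in particular the transport exponent is `γᵗ = 2-α`. -/
theorem msd_limit (α : ℝ) (hα : α ∈ Set.Ioo (0:ℝ) 2) :
    (∀ γ : ℝ, 0 ≤ γ → γ < 2 - α →
      Tendsto (fun n : ℕ => momentCG α 2 n / (n:ℝ)^γ) atTop atTop) ∧
    Tendsto (fun n : ℕ => momentCG α 2 n / (n:ℝ)^(2-α)) atTop (nhds (4 / (2 - α))) ∧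
    (∀ γ : ℝ, 2 - α < γ → γ ≤ 2 →
      Tendsto (fun n : ℕ => momentCG α 2 n / (n:ℝ)^γ) atTop (nhds 0)) := by
  have hs : 0 < 2 - α := sub_pos.2 hα.2
  have hcrit : Tendsto (fun n : ℕ => momentCG α 2 n / (n : ℝ) ^ (2 - α)) atTop
      (𝓝 (4 / (2 - α))) := by
    refine tendsto_div_of_tendsto_sub_two_div_sub
      (fun m n hmn => Real.rpow_lt_rpow (Nat.cast_nonneg _) (Nat.cast_lt.2 hmn) hs)
      ((tendsto_rpow_atTop hs).comp tendsto_natCast_atTop_atTop) ?_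
    refine ((tendsto_mul_rpow_div_rpow_sub_rpow hα.2 (2 ^ (1 / α))).comp
      tendsto_natCast_atTop_atTop).congr fun n => ?_
    rw [Function.comp_apply, momentCG_two_add_two, add_sub_cancel_left,
      ella_of_nonneg α (by positivity)]
    push_cast
    ring
  exact ⟨fun γ _ hγ => tendsto_div_rpow_atTop_of_lt hcrit (div_pos four_pos hs) hγ, hcrit,
    fun γ hγ _ => tendsto_div_rpow_zero_of_lt hcrit hγ⟩
end

section
/- For α ∈ (0,2] and p > 2, lim_{n→∞} n^{−(p−α)} Σ_{j=0}^{n−1} A_j j^p = α/(p−α), where A_j are the sub-travelling areas of the slicer map S_α. -/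
open Filter

/-- The sub-travelling areas of the slicer map `S_α` at time `n`. -/
noncomputable def subA (α : ℝ) (n : ℕ) (j : ℤ) : ℝ :=
  if j = 0 ∧ Even n then 2 * (ella α 0 - ella α 1)
  else if 0 < |j| ∧ |j| < (n:ℤ) ∧ j % 2 = (n:ℤ) % 2 then
    ella α (|j| - 1) - ella α (|j| + 1)
  else 0

/-!
The area `A_j` at time `n + 2` agrees with the one at time `n` except for the new term `j = n`,
so every two steps the moment grows by `(ℓ_{n-1} - ℓ_{n+1}) n^p`. On each parity class the
Stolz–Cesàro theorem compares these increments with those of `n^(p-α)`, and the ratio of the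
increments tends to `α / (p - α)` by a first-order expansion in `1/n`.
-/

open Finset Asymptotics Topology

theorem tendsto_of_tendsto_two_mul_of_tendsto_two_mul_add_one {β : Type*} {f : ℕ → β}
    {l : Filter β} (he : Tendsto (fun k => f (2 * k)) atTop l)
    (ho : Tendsto (fun k => f (2 * k + 1)) atTop l) : Tendsto f atTop l := by
  intro s hs
  obtain ⟨a, ha⟩ := eventually_atTop.1 (he hs)
  obtain ⟨b, hb⟩ := eventually_atTop.1 (ho hs)
  refine eventually_atTop.2 ⟨2 * (a + b) + 1, fun n hn => ?_⟩
  obtain ⟨k, rfl | rfl⟩ := Nat.even_or_odd' n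
  · exact ha k (by omega)
  · exact hb k (by omega)

/-- The Stolz–Cesàro theorem. -/
theorem tendsto_sum_range_div_sum_range {d b : ℕ → ℝ} {L : ℝ} (hb : ∀ k, 0 < b k)
    (hB : Tendsto (fun k => ∑ i ∈ range k, b i) atTop atTop)
    (h : Tendsto (fun k => d k / b k) atTop (𝓝 L)) :
    Tendsto (fun k => (∑ i ∈ range k, d i) / ∑ i ∈ range k, b i) atTop (𝓝 L) := by
  have hlo : (fun k => d k - L * b k) =o[atTop] b := by
    rw [isLittleO_iff_tendsto' (.of_forall fun k hk => absurd hk (hb k).ne')]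
    simpa [sub_div, mul_div_cancel_right₀ _ (hb _).ne'] using h.sub_const L
  have hsum := (hlo.sum_range (fun k => (hb k).le) hB).tendsto_div_nhds_zero
  refine (zero_add L ▸ hsum.add_const L).congr' ?_
  filter_upwards [hB.eventually_gt_atTop 0] with k hk
  rw [sum_sub_distrib, ← mul_sum, sub_div, mul_div_cancel_right₀ _ hk.ne', sub_add_cancel]

theorem HasDerivAt.tendsto_div_nhdsNE {𝕜 : Type*} [NontriviallyNormedField 𝕜] {f g : 𝕜 → 𝕜}
    {f' g' x : 𝕜} (hf : HasDerivAt f f' x) (hg : HasDerivAt g g' x) (hfx : f x = 0)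
    (hgx : g x = 0) (hg' : g' ≠ 0) :
    Tendsto (fun y => f y / g y) (𝓝[≠] x) (𝓝 (f' / g')) := by
  refine (hf.tendsto_slope.div hg.tendsto_slope hg').congr' ?_
  filter_upwards [self_mem_nhdsWithin] with y hy
  rw [Pi.div_apply, slope_def_field, slope_def_field, hfx, hgx, sub_zero, sub_zero,
    div_div_div_cancel_right₀ (sub_ne_zero.2 hy)]

theorem hasDerivAt_one_add_mul_rpow_zero (a s : ℝ) :
    HasDerivAt (fun x : ℝ => (1 + a * x) ^ s) (a * s) 0 := by
  simpa using (((hasDerivAt_id (0:ℝ)).const_mul a).const_add 1).rpow_const (p := s) (by simp)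

theorem Real.add_rpow_eq_rpow_mul_one_add_mul_inv {x a : ℝ} (hx : 0 < x) (ha : 0 ≤ x + a)
    (s : ℝ) : (x + a) ^ s = x ^ s * (1 + a * x⁻¹) ^ s := by
  have h : 0 ≤ 1 + a * x⁻¹ := by
    have := div_nonneg ha hx.le
    rwa [add_div, div_self hx.ne', div_eq_mul_inv] at this
  rw [← Real.mul_rpow hx.le h, mul_add, mul_one, mul_comm a, mul_inv_cancel_left₀ hx.ne']

theorem sum_range_rpow_two_mul_add_add_two_sub_rpow (q : ℝ) (r k : ℕ) :
    ∑ i ∈ range k, ((((2 * i + r : ℕ) : ℝ) + 2) ^ q - ((2 * i + r : ℕ) : ℝ) ^ q) =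
      ((2 * k + r : ℕ) : ℝ) ^ q - (r : ℝ) ^ q := by
  have hstep (i : ℕ) : ((2 * i + r : ℕ) : ℝ) + 2 = ((2 * (i + 1) + r : ℕ) : ℝ) := by
    push_cast; ring
  simp only [hstep]
  simpa using sum_range_sub (fun i => ((2 * i + r : ℕ) : ℝ) ^ q) k

theorem ella_natCast_sub_one (α : ℝ) {m : ℕ} (hm : 1 ≤ m) :
    ella α (m - 1) = ((m : ℝ) + (2 ^ (1 / α) - 1)) ^ (-α) := by
  rw [ella, abs_of_nonneg (by omega)]
  push_cast
  ring_nf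

theorem ella_natCast_add_one (α : ℝ) (m : ℕ) :
    ella α (m + 1) = ((m : ℝ) + (2 ^ (1 / α) + 1)) ^ (-α) := by
  rw [ella, abs_of_nonneg (by omega)]
  push_cast
  ring_nf

noncomputable def subAMoment (α : ℝ) (p n : ℕ) : ℝ :=
  ∑ j ∈ range n, subA α n j * (j : ℝ) ^ p

noncomputable def subAMomentIncrement (α : ℝ) (p m : ℕ) : ℝ :=
  (ella α (m - 1) - ella α (m + 1)) * (m : ℝ) ^ p

theorem subA_add_two_of_lt (α : ℝ) {n j : ℕ} (hj : j < n) :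
    subA α (n + 2) j = subA α n j := by
  simp only [subA, Nat.abs_cast, Nat.even_add, even_two, iff_true]
  congr 2
  push_cast
  apply propext
  omega

theorem subA_add_two_self_mul_pow (α : ℝ) {p : ℕ} (hp : p ≠ 0) (n : ℕ) :
    subA α (n + 2) n * (n : ℝ) ^ p = subAMomentIncrement α p n := by
  rcases n.eq_zero_or_pos with rfl | hn
  · simp [subAMomentIncrement, hp]
  · simp only [subA, Nat.abs_cast]
    rw [if_neg (by omega), if_pos (by push_cast; omega), subAMomentIncrement]

theorem subA_add_two_succ (α : ℝ) (n : ℕ) : subA α (n + 2) (n + 1 : ℕ) = 0 := by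
  simp only [subA, Nat.abs_cast]
  rw [if_neg (by omega), if_neg (by push_cast; omega)]

theorem subAMoment_add_two (α : ℝ) {p : ℕ} (hp : p ≠ 0) (n : ℕ) :
    subAMoment α p (n + 2) = subAMoment α p n + subAMomentIncrement α p n := by
  rw [subAMoment, sum_range_succ, sum_range_succ, subA_add_two_succ, zero_mul, add_zero,
    subA_add_two_self_mul_pow α hp, subAMoment,
    sum_congr rfl fun j hj => by rw [subA_add_two_of_lt α (mem_range.1 hj)]]

theorem subAMoment_two_mul_add (α : ℝ) {p : ℕ} (hp : p ≠ 0) {r : ℕ} (hr : r < 2) (k : ℕ) :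
    subAMoment α p (2 * k + r) = ∑ i ∈ range k, subAMomentIncrement α p (2 * i + r) := by
  induction k with
  | zero => interval_cases r <;> simp [subAMoment, hp]
  | succ k ih =>
    rw [show 2 * (k + 1) + r = 2 * k + r + 2 by ring, subAMoment_add_two α hp, ih, sum_range_succ]

/-- With `x = 1/m` both the increment and `(m + 2)^(p-α) - m^(p-α)` are `m^(p-α)` times a function
of `x` vanishing at `0`, with derivatives `2α` and `2(p-α)` there. -/
theorem tendsto_subAMomentIncrement_div (α : ℝ) (p : ℕ) (hαp : α ≠ p) :
    Tendsto (fun m : ℕ => subAMomentIncrement α p m /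
      (((m : ℝ) + 2) ^ ((p : ℝ) - α) - (m : ℝ) ^ ((p : ℝ) - α))) atTop (𝓝 (α / (p - α))) := by
  set c : ℝ := 2 ^ (1 / α)
  set q : ℝ := p - α
  have hc : 0 < c := by positivity
  have hφ := (hasDerivAt_one_add_mul_rpow_zero (c - 1) (-α)).sub
    (hasDerivAt_one_add_mul_rpow_zero (c + 1) (-α))
  have hψ := (hasDerivAt_one_add_mul_rpow_zero 2 q).sub_const 1
  have hlim := (hφ.tendsto_div_nhdsNE hψ (by simp) (by simp)
    (mul_ne_zero two_ne_zero (sub_ne_zero.2 hαp.symm))).comp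
    ((tendsto_inv_atTop_nhdsGT_zero.mono_right (nhdsGT_le_nhdsNE 0)).comp
      tendsto_natCast_atTop_atTop)
  rw [show (c - 1) * -α - (c + 1) * -α = 2 * α by ring, mul_div_mul_left _ _ two_ne_zero] at hlim
  refine hlim.congr' ?_
  filter_upwards [eventually_ge_atTop 1] with m hm
  have hm1 : (1 : ℝ) ≤ m := by exact_mod_cast hm
  have hm0 : (0 : ℝ) < m := by linarith
  have hrpow {a : ℝ} (ha : 0 ≤ (m : ℝ) + a) (s : ℝ) :=
    Real.add_rpow_eq_rpow_mul_one_add_mul_inv hm0 ha s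
  have hnum : subAMomentIncrement α p m =
      m ^ q * ((1 + (c - 1) * (m : ℝ)⁻¹) ^ (-α) - (1 + (c + 1) * (m : ℝ)⁻¹) ^ (-α)) := by
    have h1 : 0 ≤ (m : ℝ) + (c - 1) := by linarith
    have h2 : 0 ≤ (m : ℝ) + (c + 1) := by linarith
    rw [subAMomentIncrement, ella_natCast_sub_one α hm, ella_natCast_add_one,
      hrpow h1, hrpow h2, ← Real.rpow_natCast, show q = -α + p by ring, Real.rpow_add hm0]
    ring
  have hden : ((m : ℝ) + 2) ^ q - (m : ℝ) ^ q = m ^ q * ((1 + 2 * (m : ℝ)⁻¹) ^ q - 1) := by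
    rw [hrpow (by linarith)]
    ring
  simp only [Function.comp_apply, Pi.sub_apply]
  rw [hnum, hden, mul_div_mul_left _ _ (by positivity)]

theorem tendsto_subAMoment_two_mul_add_div (α : ℝ) {p : ℕ} (hp : p ≠ 0) (hαp : α < p)
    {r : ℕ} (hr : r < 2) :
    Tendsto (fun k : ℕ => subAMoment α p (2 * k + r) / ((2 * k + r : ℕ) : ℝ) ^ ((p : ℝ) - α))
      atTop (𝓝 (α / (p - α))) := by
  set q : ℝ := p - α
  have hq : 0 < q := sub_pos.2 hαp
  set b : ℕ → ℝ := fun i => (((2 * i + r : ℕ) : ℝ) + 2) ^ q - ((2 * i + r : ℕ) : ℝ) ^ q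
  have hb (i : ℕ) : 0 < b i := sub_pos.2 (Real.rpow_lt_rpow (by positivity) (by linarith) hq)
  have h2kr : Tendsto (fun k : ℕ => 2 * k + r) atTop atTop :=
    tendsto_atTop_mono (fun k => show id k ≤ 2 * k + r by simp only [id]; omega) tendsto_id
  have hX : Tendsto (fun k : ℕ => ((2 * k + r : ℕ) : ℝ) ^ q) atTop atTop :=
    (tendsto_rpow_atTop hq).comp (tendsto_natCast_atTop_atTop.comp h2kr)
  have hsum_b (k : ℕ) : ∑ i ∈ range k, b i = ((2 * k + r : ℕ) : ℝ) ^ q - (r : ℝ) ^ q :=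
    sum_range_rpow_two_mul_add_add_two_sub_rpow q r k
  have hB : Tendsto (fun k => ∑ i ∈ range k, b i) atTop atTop := by
    simpa only [hsum_b, sub_eq_add_neg] using tendsto_atTop_add_const_right _ _ hX
  have hstolz := tendsto_sum_range_div_sum_range hb hB
    ((tendsto_subAMomentIncrement_div α p hαp.ne).comp h2kr)
  have hratio : Tendsto (fun k => (∑ i ∈ range k, b i) / ((2 * k + r : ℕ) : ℝ) ^ q)
      atTop (𝓝 1) := by
    refine (sub_zero (1 : ℝ) ▸ tendsto_const_nhds.sub
      (tendsto_const_nhds (x := (r : ℝ) ^ q).div_atTop hX)).congr' ?_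
    filter_upwards [hX.eventually_gt_atTop 0] with k hk
    rw [hsum_b, sub_div, div_self hk.ne']
  refine (mul_one (α / q) ▸ hstolz.mul hratio).congr' ?_
  filter_upwards [hB.eventually_gt_atTop 0] with k hk
  rw [subAMoment_two_mul_add α hp hr, div_mul_div_cancel₀ hk.ne']

theorem subA_moment_limit_general (α : ℝ) (hα : α ∈ Set.Ioc (0:ℝ) 2)
    (p : ℕ) (hp2 : 2 < p) :
    Tendsto (fun n : ℕ =>
        (∑ j ∈ Finset.range n, subA α n (j:ℤ) * (j:ℝ)^p) / (n:ℝ)^((p:ℝ) - α))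
      atTop (nhds (α / ((p:ℝ) - α))) := by
  have hp : p ≠ 0 := by omega
  have hαp : α < p := hα.2.trans_lt (by exact_mod_cast hp2)
  change Tendsto (fun n => subAMoment α p n / (n : ℝ) ^ ((p : ℝ) - α)) _ _
  refine tendsto_of_tendsto_two_mul_of_tendsto_two_mul_add_one ?_ ?_
  · simpa using tendsto_subAMoment_two_mul_add_div α hp hαp (r := 0) (by norm_num)
  · simpa using tendsto_subAMoment_two_mul_add_div α hp hαp (r := 1) (by norm_num)

/-- for `α ∈ (0,2]` and even `p > 2`,
`lim_{n→∞} n^{-(p-α)} Σ_{j=0}^{n-1} A_j j^p = α/(p-α)`. -/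
theorem subA_moment_limit (α : ℝ) (hα : α ∈ Set.Ioc (0:ℝ) 2)
    (p : ℕ) (hp : Even p) (hp2 : 2 < p) :
    Tendsto (fun n : ℕ =>
        (∑ j ∈ Finset.range n, subA α n (j:ℤ) * (j:ℝ)^p) / (n:ℝ)^((p:ℝ) - α))
      atTop (nhds (α / ((p:ℝ) - α))) :=
  subA_moment_limit_general α hα p hp2
end
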